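/- arXiv:2503.19600 — 5 statements merged into one kernel-verified Lean document; each statement's English description precedes it below -/
import Mathlib

section
/- Let {M_j} be pairwise disjoint measurable subsets of R^n, {ψ_j} measurable functions with supp ψ_j ⊆ M_j, and {I_j} pairwise disjoint intervals in (0,∞). Then for every t > 0, (Σ_j ψ_j)^*(t) ≥ Σ_j χ_{I_j}(t) (ψ_j)^*(t). -/
open MeasureTheory Set ENNReal

/-- The nonincreasing rearrangement `f^*(t) = inf {τ > 0 : μ{x : ‖f x‖ > τ} ≤ t}`,
with value `∞` if no such `τ` exists. -/
noncomputable def rearr {α E : Type*} [MeasurableSpace α] [Norm E]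
    (μ : Measure α) (f : α → E) (t : ℝ) : ℝ≥0∞ :=
  sInf (ENNReal.ofReal '' {τ : ℝ | 0 < τ ∧ μ {x | τ < ‖f x‖} ≤ ENNReal.ofReal t})

lemma rearr_mono {α E F : Type*} [MeasurableSpace α] [Norm E] [Norm F]
    (μ : Measure α) (f : α → E) (g : α → F) (t : ℝ)
    (h : ∀ x, ‖f x‖ ≤ ‖g x‖) : rearr μ f t ≤ rearr μ g t := by
  apply sInf_le_sInf
  apply Set.image_mono
  rintro τ ⟨hτ, hμ⟩
  refine ⟨hτ, le_trans (measure_mono ?_) hμ⟩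
  intro x hx
  exact lt_of_lt_of_le hx (h x)

theorem rearr_sum_ge_of_disjoint_supports
    (n : ℕ) (M : ℕ → Set (Fin n → ℝ)) (ψ : ℕ → (Fin n → ℝ) → ℝ)
    (hM : ∀ j, MeasurableSet (M j))
    (hdisj : Pairwise (Function.onFun Disjoint M))
    (hψ : ∀ j, Measurable (ψ j))
    (hsupp : ∀ j, Function.support (ψ j) ⊆ M j)
    (I : ℕ → Set ℝ)
    (hI : ∀ j, I j ⊆ Ioi (0 : ℝ))
    (hIconn : ∀ j, (I j).OrdConnected)
    (hIdisj : Pairwise (Function.onFun Disjoint I)) :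
    ∀ t : ℝ, 0 < t →
      ∑' j, (I j).indicator (fun s => rearr volume (ψ j) s) t ≤
        rearr volume (fun x => ∑' j, ψ j x) t := by
  intro t ht
  have key : ∀ j, rearr volume (ψ j) t ≤ rearr volume (fun x => ∑' i, ψ i x) t := by
    intro j
    apply rearr_mono
    intro x
    by_cases hx : ψ j x = 0
    · simp [hx]
    · have hxM : x ∈ M j := hsupp j hx
      have : (∑' i, ψ i x) = ψ j x := by
        apply tsum_eq_single
        intro i hij
        by_contra hne
        exact (hdisj hij (by exact Set.singleton_subset_iff.2 (hsupp i hne))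
          (Set.singleton_subset_iff.2 hxM)) rfl
      simp [this]
  by_cases hex : ∃ j, t ∈ I j
  · obtain ⟨j0, hj0⟩ := hex
    have hsum : (∑' j, (I j).indicator (fun s => rearr volume (ψ j) s) t)
        = (I j0).indicator (fun s => rearr volume (ψ j0) s) t := by
      apply tsum_eq_single
      intro i hij
      have : t ∉ I i := by
        intro hti
        exact (hIdisj hij (Set.singleton_subset_iff.2 hti)
          (Set.singleton_subset_iff.2 hj0)) rfl
      simp [Set.indicator_of_notMem this]
    rw [hsum, Set.indicator_of_mem hj0]
    exact key j0
  · push_neg at hex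
    have : ∀ j, (I j).indicator (fun s => rearr volume (ψ j) s) t = 0 := fun j =>
      Set.indicator_of_notMem (hex j) _
    simp [this]
end

section
/- Let 0 < p_0 < p_1 ≤ ∞ and 0 < q_0 < q_1 ≤ ∞. For every x in ℓ^{q_0}(ℓ^{p_0}), one has ‖x‖_{ℓ^{q_1}(ℓ^{p_1})} ≤ ‖x‖_{ℓ^{q_0}(ℓ^{p_0})}^θ · ‖x‖_{c_0}^{1-θ}, where θ = max(q_0/q_1, p_0/p_1). -/
open MeasureTheory Set ENNReal

/-- The `ℓ^p` norm of a family of extended nonnegative reals (with `p = ∞` giving the sup). -/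
noncomputable def elpE {ι : Type*} (p : ℝ≥0∞) (x : ι → ℝ≥0∞) : ℝ≥0∞ :=
  if p = ∞ then ⨆ k, x k else (∑' k, x k ^ p.toReal) ^ (1 / p.toReal)

/-- The `ℓ^p` (quasi-)norm of a real-valued family. -/
noncomputable def elp {ι : Type*} (p : ℝ≥0∞) (x : ι → ℝ) : ℝ≥0∞ :=
  elpE p fun k => (‖x k‖₊ : ℝ≥0∞)

/-- The mixed norm of `ℓ^q(ℓ^p)` on double sequences (inner exponent `p`, outer `q`). -/
noncomputable def elp2 (p q : ℝ≥0∞) (x : ℕ → ℕ → ℝ) : ℝ≥0∞ :=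
  elpE q fun j => elp p (x j)

namespace ElpAux

lemma le_rpow_tsum {ι : Type*} (f : ι → ℝ≥0∞) {r : ℝ} (hr : 0 < r) (j : ι) :
    f j ≤ (∑' k, f k ^ r) ^ (1 / r) := by
  have h1 : f j = (f j ^ r) ^ (1 / r) := by
    rw [← ENNReal.rpow_mul, mul_one_div_cancel hr.ne', ENNReal.rpow_one]
  rw [h1]
  exact ENNReal.rpow_le_rpow (ENNReal.le_tsum j) (by positivity)

lemma iSup_le_rpow_tsum {ι : Type*} (f : ι → ℝ≥0∞) {r : ℝ} (hr : 0 < r) :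
    (⨆ k, f k) ≤ (∑' k, f k ^ r) ^ (1 / r) :=
  iSup_le fun j => le_rpow_tsum f hr j

lemma trade {m n : ℝ≥0∞} (h : m ≤ n) {b θ : ℝ} (hb : 0 ≤ b) (hbθ : b ≤ θ)
    (hθ : θ ≤ 1) : n ^ b * m ^ (1 - b) ≤ n ^ θ * m ^ (1 - θ) := by
  have e1 : m ^ (1 - b) = m ^ (θ - b) * m ^ (1 - θ) := by
    rw [← ENNReal.rpow_add_of_nonneg _ _ (by linarith) (by linarith)]
    congr 1; ring
  have e2 : n ^ b * n ^ (θ - b) = n ^ θ := by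
    rw [← ENNReal.rpow_add_of_nonneg _ _ hb (by linarith)]
    congr 1; ring
  calc n ^ b * m ^ (1 - b) = n ^ b * (m ^ (θ - b) * m ^ (1 - θ)) := by rw [e1]
    _ ≤ n ^ b * (n ^ (θ - b) * m ^ (1 - θ)) :=
        mul_le_mul_right (mul_le_mul_left (ENNReal.rpow_le_rpow h (by linarith)) _) _
    _ = n ^ θ * m ^ (1 - θ) := by rw [← mul_assoc, e2]

lemma interp_single {ι : Type*} (f : ι → ℝ≥0∞) {r₀ r₁ : ℝ} (h0 : 0 < r₀) (h01 : r₀ ≤ r₁) :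
    (∑' k, f k ^ r₁) ^ (1 / r₁) ≤
      ((∑' k, f k ^ r₀) ^ (1 / r₀)) ^ (r₀ / r₁) * (⨆ k, f k) ^ (1 - r₀ / r₁) := by
  have h1 : 0 < r₁ := h0.trans_le h01
  have key : (∑' k, f k ^ r₁) ≤ (∑' k, f k ^ r₀) * (⨆ k, f k) ^ (r₁ - r₀) := by
    rw [← ENNReal.tsum_mul_right]
    refine ENNReal.tsum_le_tsum fun k => ?_
    have e : f k ^ r₁ = f k ^ r₀ * f k ^ (r₁ - r₀) := by
      rw [← ENNReal.rpow_add_of_nonneg _ _ h0.le (by linarith)]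
      congr 1; ring
    rw [e]
    exact mul_le_mul_right (ENNReal.rpow_le_rpow (le_iSup f k) (by linarith)) _
  calc (∑' k, f k ^ r₁) ^ (1 / r₁)
      ≤ ((∑' k, f k ^ r₀) * (⨆ k, f k) ^ (r₁ - r₀)) ^ (1 / r₁) :=
        ENNReal.rpow_le_rpow key (by positivity)
    _ = (∑' k, f k ^ r₀) ^ (1 / r₁) * ((⨆ k, f k) ^ (r₁ - r₀)) ^ (1 / r₁) :=
        ENNReal.mul_rpow_of_nonneg _ _ (by positivity)
    _ = ((∑' k, f k ^ r₀) ^ (1 / r₀)) ^ (r₀ / r₁) * (⨆ k, f k) ^ (1 - r₀ / r₁) := by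
        rw [← ENNReal.rpow_mul, ← ENNReal.rpow_mul,
          show (1 / r₀) * (r₀ / r₁) = 1 / r₁ by field_simp,
          show (r₁ - r₀) * (1 / r₁) = 1 - r₀ / r₁ by field_simp]

end ElpAux

theorem elp2_interpolation_ineq (p₀ p₁ q₀ q₁ : ℝ≥0∞)
    (hp₀ : 0 < p₀) (hp : p₀ < p₁) (hq₀ : 0 < q₀) (hq : q₀ < q₁)
    (x : ℕ → ℕ → ℝ) (hx : elp2 p₀ q₀ x ≠ ∞) :
    elp2 p₁ q₁ x ≤
      elp2 p₀ q₀ x ^ max (q₀.toReal / q₁.toReal) (p₀.toReal / p₁.toReal) *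
        (⨆ j, ⨆ k, (‖x j k‖₊ : ℝ≥0∞)) ^
          (1 - max (q₀.toReal / q₁.toReal) (p₀.toReal / p₁.toReal)) := by
  clear hx
  have hp₀t : p₀ ≠ ∞ := hp.ne_top
  have hq₀t : q₀ ≠ ∞ := hq.ne_top
  have hP₀ : 0 < p₀.toReal := ENNReal.toReal_pos hp₀.ne' hp₀t
  have hQ₀ : 0 < q₀.toReal := ENNReal.toReal_pos hq₀.ne' hq₀t
  set b := p₀.toReal / p₁.toReal with hbdef
  set a := q₀.toReal / q₁.toReal with hadef
  set θ := max a b with hθdef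
  set M := ⨆ j, ⨆ k, (‖x j k‖₊ : ℝ≥0∞) with hMdef
  set A := elp2 p₀ q₀ x with hAdef
  have hb0 : 0 ≤ b := div_nonneg ENNReal.toReal_nonneg ENNReal.toReal_nonneg
  have ha0 : 0 ≤ a := div_nonneg ENNReal.toReal_nonneg ENNReal.toReal_nonneg
  have hb1 : b ≤ 1 := by
    rcases eq_or_ne p₁ ∞ with h | h
    · simp [hbdef, h]
    · exact le_of_lt ((div_lt_one (ENNReal.toReal_pos (hp₀.trans hp).ne' h)).mpr
        ((ENNReal.toReal_lt_toReal hp₀t h).mpr hp))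
  have ha1 : a ≤ 1 := by
    rcases eq_or_ne q₁ ∞ with h | h
    · simp [hadef, h]
    · exact le_of_lt ((div_lt_one (ENNReal.toReal_pos (hq₀.trans hq).ne' h)).mpr
        ((ENNReal.toReal_lt_toReal hq₀t h).mpr hq))
  have hθ0 : 0 ≤ θ := le_trans ha0 (le_max_left a b)
  have hθ1 : θ ≤ 1 := max_le ha1 hb1
  have hAe : A = (∑' j, elp p₀ (x j) ^ q₀.toReal) ^ (1 / q₀.toReal) := by
    rw [hAdef]; simp [elp2, elpE, hq₀t]
  have hN₀A : ∀ j, elp p₀ (x j) ≤ A := by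
    intro j; rw [hAe]; exact ElpAux.le_rpow_tsum _ hQ₀ j
  have hN₀e : ∀ j, elp p₀ (x j) =
      (∑' k, (‖x j k‖₊ : ℝ≥0∞) ^ p₀.toReal) ^ (1 / p₀.toReal) := by
    intro j; simp [elp, elpE, hp₀t]
  have hMj : ∀ j, (⨆ k, (‖x j k‖₊ : ℝ≥0∞)) ≤ elp p₀ (x j) := by
    intro j; rw [hN₀e j]; exact ElpAux.iSup_le_rpow_tsum _ hP₀
  have hMjM : ∀ j, (⨆ k, (‖x j k‖₊ : ℝ≥0∞)) ≤ M := by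
    intro j; rw [hMdef]; exact le_iSup (fun j => ⨆ k, (‖x j k‖₊ : ℝ≥0∞)) j
  -- inner interpolation
  have key : ∀ j, elp p₁ (x j) ≤ elp p₀ (x j) ^ θ * M ^ (1 - θ) := by
    intro j
    have step : elp p₁ (x j) ≤ elp p₀ (x j) ^ θ * (⨆ k, (‖x j k‖₊ : ℝ≥0∞)) ^ (1 - θ) := by
      rcases eq_or_ne p₁ ∞ with h | h
      · have e : elp p₁ (x j) = ⨆ k, (‖x j k‖₊ : ℝ≥0∞) := by simp [elp, elpE, h]
        rw [e]
        calc (⨆ k, (‖x j k‖₊ : ℝ≥0∞))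
            = (⨆ k, (‖x j k‖₊ : ℝ≥0∞)) ^ θ * (⨆ k, (‖x j k‖₊ : ℝ≥0∞)) ^ (1 - θ) := by
              rw [← ENNReal.rpow_add_of_nonneg _ _ hθ0 (by linarith)]
              rw [show θ + (1 - θ) = 1 by ring, ENNReal.rpow_one]
          _ ≤ elp p₀ (x j) ^ θ * (⨆ k, (‖x j k‖₊ : ℝ≥0∞)) ^ (1 - θ) := by
              gcongr
              exact hMj j
      · have e : elp p₁ (x j) =
            (∑' k, (‖x j k‖₊ : ℝ≥0∞) ^ p₁.toReal) ^ (1 / p₁.toReal) := by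
          simp [elp, elpE, h]
        rw [e, hN₀e j]
        refine le_trans (ElpAux.interp_single _ hP₀
          ((ENNReal.toReal_le_toReal hp₀t h).mpr hp.le)) ?_
        have := ElpAux.trade (m := ⨆ k, (‖x j k‖₊ : ℝ≥0∞))
          (n := (∑' k, (‖x j k‖₊ : ℝ≥0∞) ^ p₀.toReal) ^ (1 / p₀.toReal))
          (by rw [← hN₀e j]; exact hMj j) hb0 (le_max_right a b) hθ1
        exact this
    refine step.trans ?_
    exact mul_le_mul_right (ENNReal.rpow_le_rpow (hMjM j) (by linarith)) _
  rcases eq_or_ne q₁ ∞ with h | h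
  · have e : elp2 p₁ q₁ x = ⨆ j, elp p₁ (x j) := by simp [elp2, elpE, h]
    rw [e]
    refine iSup_le fun j => (key j).trans ?_
    exact mul_le_mul_left (ENNReal.rpow_le_rpow (hN₀A j) hθ0) _
  · have hQ₁ : 0 < q₁.toReal := ENNReal.toReal_pos (hq₀.trans hq).ne' h
    have haθ : q₀.toReal ≤ θ * q₁.toReal := by
      have h1 : a ≤ θ := le_max_left a b
      rw [hadef] at h1
      exact (div_le_iff₀ hQ₁).mp h1
    have e : elp2 p₁ q₁ x = (∑' j, elp p₁ (x j) ^ q₁.toReal) ^ (1 / q₁.toReal) := by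
      simp [elp2, elpE, h]
    rw [e]
    have step1 : (∑' j, elp p₁ (x j) ^ q₁.toReal) ≤
        (∑' j, elp p₀ (x j) ^ (θ * q₁.toReal)) * M ^ ((1 - θ) * q₁.toReal) := by
      rw [← ENNReal.tsum_mul_right]
      refine ENNReal.tsum_le_tsum fun j => ?_
      calc elp p₁ (x j) ^ q₁.toReal
          ≤ (elp p₀ (x j) ^ θ * M ^ (1 - θ)) ^ q₁.toReal :=
            ENNReal.rpow_le_rpow (key j) hQ₁.le
        _ = elp p₀ (x j) ^ (θ * q₁.toReal) * M ^ ((1 - θ) * q₁.toReal) := by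
            rw [ENNReal.mul_rpow_of_nonneg _ _ hQ₁.le, ← ENNReal.rpow_mul, ← ENNReal.rpow_mul]
    have hsum : (∑' j, elp p₀ (x j) ^ q₀.toReal) = A ^ q₀.toReal := by
      rw [hAe, ← ENNReal.rpow_mul, one_div, inv_mul_cancel₀ hQ₀.ne', ENNReal.rpow_one]
    have step2 : (∑' j, elp p₀ (x j) ^ (θ * q₁.toReal)) ≤ A ^ (θ * q₁.toReal) := by
      calc (∑' j, elp p₀ (x j) ^ (θ * q₁.toReal))
          ≤ ∑' j, elp p₀ (x j) ^ q₀.toReal * A ^ (θ * q₁.toReal - q₀.toReal) := by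
            refine ENNReal.tsum_le_tsum fun j => ?_
            have e2 : elp p₀ (x j) ^ (θ * q₁.toReal) =
                elp p₀ (x j) ^ q₀.toReal * elp p₀ (x j) ^ (θ * q₁.toReal - q₀.toReal) := by
              rw [← ENNReal.rpow_add_of_nonneg _ _ hQ₀.le (by linarith)]
              congr 1; ring
            rw [e2]
            exact mul_le_mul_right (ENNReal.rpow_le_rpow (hN₀A j) (by linarith)) _
        _ = A ^ q₀.toReal * A ^ (θ * q₁.toReal - q₀.toReal) := by
            rw [ENNReal.tsum_mul_right, hsum]
        _ = A ^ (θ * q₁.toReal) := by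
            rw [← ENNReal.rpow_add_of_nonneg _ _ hQ₀.le (by linarith)]
            congr 1; ring
    calc (∑' j, elp p₁ (x j) ^ q₁.toReal) ^ (1 / q₁.toReal)
        ≤ (A ^ (θ * q₁.toReal) * M ^ ((1 - θ) * q₁.toReal)) ^ (1 / q₁.toReal) := by
          exact ENNReal.rpow_le_rpow (step1.trans (mul_le_mul_left step2 _))
            (by positivity)
      _ = A ^ θ * M ^ (1 - θ) := by
          rw [ENNReal.mul_rpow_of_nonneg _ _ (by positivity), ← ENNReal.rpow_mul,
            ← ENNReal.rpow_mul, show θ * q₁.toReal * (1 / q₁.toReal) = θ by field_simp,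
            show (1 - θ) * q₁.toReal * (1 / q₁.toReal) = 1 - θ by field_simp]
end

section
/- Let 0 < p ≤ ∞ and n ≥ 1. For every n-dimensional subspace V ⊆ ℓ^p, there exists a nonzero x ∈ V with ‖x‖_{∞} ≤ n^{-1/p} ‖x‖_{ℓ^p}. -/
open MeasureTheory Set ENNReal

/-- If `x` has finite `ℓ^p` quasi-norm for `0 < p < ∞`, then for each `c > 0` only finitely
many coordinates of `x` exceed `c` in absolute value. -/
lemma elp_c0 {p : ℝ≥0∞} (hp0 : p ≠ 0) (hpt : p ≠ ∞) {x : ℕ → ℝ}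
    (h : elp p x ≠ ∞) {c : ℝ} (hc : 0 < c) : {k | c ≤ |x k|}.Finite := by
  have hq : 0 < p.toReal := ENNReal.toReal_pos hp0 hpt
  have hsum : (∑' k, ((‖x k‖₊ : ℝ≥0∞)) ^ p.toReal) ≠ ∞ := by
    intro hT
    apply h
    simp only [elp, elpE, if_neg hpt, hT]
    exact ENNReal.top_rpow_of_pos (by positivity)
  have htends := ENNReal.tendsto_cofinite_zero_of_tsum_ne_top hsum
  have hpos : (0 : ℝ≥0∞) < (ENNReal.ofReal c) ^ p.toReal :=
    ENNReal.rpow_pos (ENNReal.ofReal_pos.mpr hc) ENNReal.ofReal_ne_top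
  have hev : {k | ¬ ((‖x k‖₊ : ℝ≥0∞)) ^ p.toReal < (ENNReal.ofReal c) ^ p.toReal}.Finite :=
    Filter.eventually_cofinite.mp (htends.eventually_lt_const hpos)
  refine hev.subset fun k hk => ?_
  simp only [Set.mem_setOf_eq, not_lt]
  refine ENNReal.rpow_le_rpow ?_ hq.le
  rw [← enorm_eq_nnnorm, ← ofReal_norm]
  exact ENNReal.ofReal_le_ofReal (by rwa [Real.norm_eq_abs])

/-- Every `n`-dimensional subspace of `ℓ^p` contains a nonzero vector `x` with
`‖x‖_∞ ≤ n^{-1/p} ‖x‖_{ℓ^p}`. -/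
theorem exists_small_supnorm_in_finite_dim_subspace
    (p : ℝ≥0∞) (hp : 0 < p) (n : ℕ) (hn : 1 ≤ n)
    (V : Submodule ℝ (ℕ → ℝ)) (hdim : Module.finrank ℝ V = n)
    (hV : ∀ x ∈ V, elp p x ≠ ∞) :
    ∃ x ∈ V, x ≠ 0 ∧
      (⨆ k, (‖x k‖₊ : ℝ≥0∞)) ≤ (n : ℝ≥0∞) ^ (-(1 / p.toReal)) * elp p x := by
  classical
  rcases eq_or_ne p ∞ with hpt | hpt
  · -- the case `p = ∞` is trivial: any nonzero vector works
    subst hpt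
    have hVne : V ≠ ⊥ := by
      intro hbot
      rw [hbot, finrank_bot] at hdim
      omega
    obtain ⟨x, hxV, hx0⟩ := Submodule.exists_mem_ne_zero_of_ne_bot hVne
    refine ⟨x, hxV, hx0, ?_⟩
    simp [elp, elpE]
  · have hp0 : p ≠ 0 := hp.ne'
    have hq : 0 < p.toReal := ENNReal.toReal_pos hp0 hpt
    -- Key induction: there is a vector in `V` with sup norm at most 1 attaining the value 1
    -- in at least `m` coordinates, for every `m ≤ n`.
    have key : ∀ m, m ≤ n → ∃ x, x ∈ V ∧ (∀ k, |x k| ≤ 1) ∧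
        ∃ A : Finset ℕ, m ≤ A.card ∧ ∀ k ∈ A, |x k| = 1 := by
      intro m
      induction m with
      | zero => exact fun _ => ⟨0, V.zero_mem, by simp, ∅, by simp⟩
      | succ m ih =>
        intro hm
        obtain ⟨x, hxV, hxb, A, hA, hA1⟩ := ih (le_trans (Nat.le_succ m) hm)
        have hxc0 : ∀ c : ℝ, 0 < c → {k | c ≤ |x k|}.Finite :=
          fun c hc => elp_c0 hp0 hpt (hV x hxV) hc
        have hPfin : {k : ℕ | |x k| = 1}.Finite :=
          (hxc0 1 one_pos).subset fun k hk => le_of_eq hk.symm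
        set P : Finset ℕ := hPfin.toFinset with hPdef
        have hmemP : ∀ k, k ∈ P ↔ |x k| = 1 := fun k => by simp [hPdef]
        have hAP : A ⊆ P := fun k hk => (hmemP k).mpr (hA1 k hk)
        by_cases hcard : m + 1 ≤ P.card
        · exact ⟨x, hxV, hxb, P, hcard, fun k hk => (hmemP k).mp hk⟩
        · have hPn : P.card < n := by
            have := Finset.card_le_card hAP
            omega
          -- find a nonzero `y ∈ V` vanishing on all of `P`
          let φ : V →ₗ[ℝ] (↥(P : Finset ℕ) → ℝ) :=
            LinearMap.pi fun j => (LinearMap.proj (j : ℕ)).comp V.subtype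
          have hker : LinearMap.ker φ ≠ ⊥ := by
            intro hbot
            have hinj : Function.Injective φ := LinearMap.ker_eq_bot.mp hbot
            have hle := LinearMap.finrank_le_finrank_of_injective hinj
            rw [hdim, Module.finrank_fintype_fun_eq_card, Fintype.card_coe] at hle
            omega
          obtain ⟨v, hvker, hv0⟩ := Submodule.exists_mem_ne_zero_of_ne_bot hker
          set y : ℕ → ℝ := (v : ℕ → ℝ) with hydef
          have hyV : y ∈ V := v.2
          have hyP : ∀ k ∈ P, y k = 0 := by
            intro k hk
            have : φ v = 0 := LinearMap.mem_ker.mp hvker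
            exact congr_fun this ⟨k, hk⟩
          have hy0 : y ≠ 0 := by
            intro h0
            exact hv0 (Subtype.ext h0)
          obtain ⟨k1, hk1⟩ : ∃ k, y k ≠ 0 := Function.ne_iff.mp hy0
          have hk1P : k1 ∉ P := fun hk => hk1 (hyP k1 hk)
          have hyk1 : 0 < |y k1| := abs_pos.mpr hk1
          set E : ℝ := (2 + |x k1|) / |y k1| with hEdef
          have hE : 0 < E := by positivity
          have hEy : E * |y k1| = 2 + |x k1| := by
            rw [hEdef, div_mul_cancel₀ _ hyk1.ne']
          have hE2 : 2 ≤ |x k1 + E * y k1| := by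
            have h1 : |E * y k1| ≤ |x k1 + E * y k1| + |x k1| := by
              calc |E * y k1| = |(x k1 + E * y k1) - x k1| := by ring_nf
                _ ≤ |x k1 + E * y k1| + |x k1| := abs_sub _ _
            rw [abs_mul, abs_of_pos hE, hEy] at h1
            linarith
          have hyc0 : ∀ c : ℝ, 0 < c → {k | c ≤ |y k|}.Finite :=
            fun c hc => elp_c0 hp0 hpt (hV y hyV) hc
          -- the finite set of "relevant" coordinates
          have hSFfin : ({k : ℕ | 1 ≤ |x k| + E * |y k|} \ (P : Set ℕ)).Finite := by
            refine (((hxc0 (1/2) (by norm_num)).union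
              (hyc0 (1/(2*E)) (by positivity))).subset ?_)
            rintro k ⟨hk, -⟩
            simp only [Set.mem_setOf_eq] at hk ⊢
            by_contra hcon
            simp only [Set.mem_union, Set.mem_setOf_eq, not_or, not_le] at hcon
            obtain ⟨h1, h2⟩ := hcon
            have h3 : E * |y k| < E * (1/(2*E)) := mul_lt_mul_of_pos_left h2 hE
            have h4 : E * (1/(2*E)) = 1/2 := by
              field_simp
            linarith
          set F : Finset ℕ := hSFfin.toFinset with hFdef
          have hmemF : ∀ k, k ∈ F ↔ (1 ≤ |x k| + E * |y k| ∧ k ∉ P) := by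
            intro k; simp [hFdef]
          have hk1F : k1 ∈ F := by
            rw [hmemF]
            refine ⟨?_, hk1P⟩
            rw [hEy]
            have := abs_nonneg (x k1)
            linarith
          have hFne : F.Nonempty := ⟨k1, hk1F⟩
          set g : ℝ → ℝ := fun ε => F.sup' hFne (fun k => |x k + ε * y k|) with hgdef
          have hgcont : Continuous g := by
            refine Continuous.finset_sup'_apply hFne fun i _ => ?_
            exact (continuous_const.add (continuous_id.mul continuous_const)).abs
          have hg0 : g 0 < 1 := by
            rw [hgdef]
            rw [Finset.sup'_lt_iff]
            intro k hk
            rw [hmemF] at hk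
            simp only [zero_mul, add_zero]
            exact lt_of_le_of_ne (hxb k) (fun h => hk.2 ((hmemP k).mpr h))
          have hgE : 2 ≤ g E := hE2.trans (Finset.le_sup' (fun k => |x k + E * y k|) hk1F)
          -- intermediate value theorem: find `ε` with `g ε = 1`
          have h1mem : (1 : ℝ) ∈ Set.Icc (g 0) (g E) := ⟨hg0.le, by linarith⟩
          obtain ⟨ε, hεIcc, hgε⟩ :=
            (intermediate_value_Icc hE.le hgcont.continuousOn) h1mem
          obtain ⟨hε0, hεE⟩ := hεIcc
          set x' : ℕ → ℝ := x + ε • y with hx'def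
          have hx'app : ∀ k, x' k = x k + ε * y k := fun k => rfl
          have hx'V : x' ∈ V := V.add_mem hxV (V.smul_mem ε hyV)
          have hx'b : ∀ k, |x' k| ≤ 1 := by
            intro k
            by_cases hkP : k ∈ P
            · rw [hx'app, hyP k hkP, mul_zero, add_zero]
              exact hxb k
            · by_cases hkF : k ∈ F
              · rw [hx'app]
                calc |x k + ε * y k| ≤ g ε :=
                      Finset.le_sup' (fun k => |x k + ε * y k|) hkF
                  _ = 1 := hgε
              · have hk' : ¬ (1 ≤ |x k| + E * |y k|) := by
                  intro hcon
                  exact hkF ((hmemF k).mpr ⟨hcon, hkP⟩)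
                push_neg at hk'
                rw [hx'app]
                calc |x k + ε * y k| ≤ |x k| + |ε * y k| := abs_add_le _ _
                  _ = |x k| + ε * |y k| := by rw [abs_mul, abs_of_nonneg hε0]
                  _ ≤ |x k| + E * |y k| := by
                      have := abs_nonneg (y k)
                      nlinarith
                  _ ≤ 1 := hk'.le
          obtain ⟨k0, hk0F, hk0⟩ := F.exists_mem_eq_sup' hFne (fun k => |x k + ε * y k|)
          have hk0P : k0 ∉ P := ((hmemF k0).mp hk0F).2
          have hk0peak : |x' k0| = 1 := by
            rw [hx'app, ← hk0]; exact hgε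
          refine ⟨x', hx'V, hx'b, insert k0 P, ?_, ?_⟩
          · rw [Finset.card_insert_of_notMem hk0P]
            have := Finset.card_le_card hAP
            omega
          · intro k hk
            rcases Finset.mem_insert.mp hk with rfl | hkP
            · exact hk0peak
            · rw [hx'app, hyP k hkP, mul_zero, add_zero]
              exact (hmemP k).mp hkP
    -- conclude: take `x` with `n` peak coordinates
    obtain ⟨x, hxV, hxb, A, hA, hA1⟩ := key n le_rfl
    have hAne : A.Nonempty := Finset.card_pos.mp (by omega)
    obtain ⟨kstar, hkstar⟩ := hAne
    have hx0 : x ≠ 0 := by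
      intro h0
      have := hA1 _ hkstar
      rw [h0] at this
      simp at this
    refine ⟨x, hxV, hx0, ?_⟩
    have hsup : (⨆ k, (‖x k‖₊ : ℝ≥0∞)) ≤ 1 := by
      refine iSup_le fun k => ?_
      rw [← enorm_eq_nnnorm, ← ofReal_norm, ← ENNReal.ofReal_one]
      exact ENNReal.ofReal_le_ofReal (by rw [Real.norm_eq_abs]; exact hxb k)
    have hone : ∀ k ∈ A, ((‖x k‖₊ : ℝ≥0∞)) ^ p.toReal = 1 := by
      intro k hk
      rw [← enorm_eq_nnnorm, ← ofReal_norm, Real.norm_eq_abs, hA1 k hk, ENNReal.ofReal_one,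
        ENNReal.one_rpow]
    have hsum : (n : ℝ≥0∞) ≤ ∑' k, ((‖x k‖₊ : ℝ≥0∞)) ^ p.toReal := by
      calc (n : ℝ≥0∞) ≤ (A.card : ℝ≥0∞) := by exact_mod_cast Nat.cast_le.mpr hA
        _ = ∑ k ∈ A, ((‖x k‖₊ : ℝ≥0∞)) ^ p.toReal := by
            rw [Finset.sum_congr rfl hone, Finset.sum_const, nsmul_eq_mul, mul_one]
        _ ≤ ∑' k, ((‖x k‖₊ : ℝ≥0∞)) ^ p.toReal := ENNReal.sum_le_tsum A
    have help : (n : ℝ≥0∞) ^ (1 / p.toReal) ≤ elp p x := by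
      rw [elp, elpE, if_neg hpt]
      exact ENNReal.rpow_le_rpow hsum (by positivity)
    have hn0 : (n : ℝ≥0∞) ≠ 0 := Nat.cast_ne_zero.mpr (by omega)
    have hnt : (n : ℝ≥0∞) ≠ ∞ := ENNReal.natCast_ne_top n
    calc (⨆ k, (‖x k‖₊ : ℝ≥0∞)) ≤ 1 := hsup
      _ = (n : ℝ≥0∞) ^ (-(1 / p.toReal)) * (n : ℝ≥0∞) ^ (1 / p.toReal) := by
          rw [← ENNReal.rpow_add _ _ hn0 hnt]
          simp
      _ ≤ (n : ℝ≥0∞) ^ (-(1 / p.toReal)) * elp p x := mul_le_mul_right help _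
end

section
/- Let 0 < p_0 < p_1 ≤ ∞ and 0 < q_0 < q_1 ≤ ∞. Then the n-th Bernstein number of the inclusion map ℓ^{q_0}(ℓ^{p_0}) ↪ ℓ^{q_1}(ℓ^{p_1}) satisfies b_n ≤ n^{-min(1/p_0, 1/q_0)(1 - max(q_0/q_1, p_0/p_1))}. In particular, the inclusion is finitely strictly singular. -/
open MeasureTheory Set ENNReal Filter

/-- The `n`-th Bernstein number of the identity viewed as a map from the space with
(quasi-)norm `N` to the space with (quasi-)norm `M`: the supremum over `n`-dimensional
subspaces (consisting of elements of finite `N`-norm) of the infimum of `M x` over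
`N`-unit vectors `x` in the subspace. -/
noncomputable def bern {E : Type*} [AddCommGroup E] [Module ℝ E]
    (N M : E → ℝ≥0∞) (n : ℕ) : ℝ≥0∞ :=
  ⨆ V : {V : Submodule ℝ E // Module.finrank ℝ V = n ∧ ∀ x ∈ V, N x ≠ ∞},
    ⨅ x : {x : E // x ∈ V.1 ∧ N x = 1}, M x.1

/-!
A vector `x` with `|x i| ≤ 1` everywhere and `|x i| = 1` on a set `S` of `n` coordinates has
`ℓ^{q₀}(ℓ^{p₀})`-norm `N ≥ n^{1/r}`, `r = max(p₀, q₀)`, while log-convexity of `ℓ^p`-norms,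
`‖v‖_{p/θ} ≤ ‖v‖_∞^{1-θ} ‖v‖_p^θ`, applied in both variables gives `‖x‖_{ℓ^{q₁}(ℓ^{p₁})} ≤ N^θ`
with `θ = max(q₀/q₁, p₀/p₁)`. Normalizing, `b_n ≤ N^{θ-1} ≤ n^{-(1-θ)/r}`.

Every `n`-dimensional space `V` of sequences tending to `0` contains such an `x`: starting from
`x = 0`, `S = ∅`, while `|S| < n` some nonzero `y ∈ V` vanishes on `S`, and by the intermediate
value theorem there is `c` with `|x + c y| ≤ 1` attaining `1` at a new coordinate.
-/

open scoped NNReal Topology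

section TsumRpow

variable {ι : Type*} {x : ι → ℝ≥0∞} {T : ℝ≥0∞} {c d θ : ℝ}

lemma le_tsum_rpow_one_div (hc : 0 < c) (x : ι → ℝ≥0∞) (k : ι) :
    x k ≤ (∑' i, x i ^ c) ^ (1 / c) := by
  calc x k = (x k ^ c) ^ (1 / c) := by rw [← ENNReal.rpow_mul, mul_one_div_cancel hc.ne', rpow_one]
    _ ≤ _ := by gcongr; exact ENNReal.le_tsum k

lemma tsum_rpow_le_mul_tsum_rpow (hc : 0 ≤ c) (hcd : c ≤ d) (hT : ∀ i, x i ≤ T) :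
    ∑' i, x i ^ d ≤ T ^ (d - c) * ∑' i, x i ^ c := by
  rw [← ENNReal.tsum_mul_left]
  refine ENNReal.tsum_le_tsum fun i => ?_
  rw [← sub_add_cancel d c, ENNReal.rpow_add_of_nonneg _ _ (sub_nonneg.2 hcd) hc,
    add_sub_cancel_right]
  gcongr
  exact hT i

lemma tsum_rpow_one_div_le_of_le (hc : 0 < c) (hcd : c ≤ d) (x : ι → ℝ≥0∞) :
    (∑' i, x i ^ d) ^ (1 / d) ≤ (∑' i, x i ^ c) ^ (1 / c) := by
  set S := (∑' i, x i ^ c) ^ (1 / c)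
  have hd : 0 < d := hc.trans_le hcd
  have hSc : ∑' i, x i ^ c = S ^ c := by
    rw [← ENNReal.rpow_mul, one_div_mul_cancel hc.ne', rpow_one]
  calc (∑' i, x i ^ d) ^ (1 / d) ≤ (S ^ (d - c) * S ^ c) ^ (1 / d) := by
        rw [← hSc]
        gcongr
        exact tsum_rpow_le_mul_tsum_rpow hc.le hcd (le_tsum_rpow_one_div hc x)
    _ = S := by
        rw [← ENNReal.rpow_add_of_nonneg _ _ (sub_nonneg.2 hcd) hc.le, sub_add_cancel,
          ← ENNReal.rpow_mul, mul_one_div_cancel hd.ne', rpow_one]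

lemma tsum_rpow_one_div_le_rpow_mul (hc : 0 < c) (hθ : 0 < θ) (hθ1 : θ ≤ 1) (hd : c / θ ≤ d)
    (hT : ∀ i, x i ≤ T) :
    (∑' i, x i ^ d) ^ (1 / d) ≤ T ^ (1 - θ) * (∑' i, x i ^ c) ^ (θ / c) := by
  have hcθ : c ≤ c / θ := le_div_self hc.le hθ hθ1
  calc (∑' i, x i ^ d) ^ (1 / d) ≤ (∑' i, x i ^ (c / θ)) ^ (θ / c) := by
        simpa only [one_div_div] using tsum_rpow_one_div_le_of_le (hc.trans_le hcθ) hd x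
    _ ≤ (T ^ (c / θ - c) * ∑' i, x i ^ c) ^ (θ / c) := by
        gcongr
        exact tsum_rpow_le_mul_tsum_rpow hc.le hcθ hT
    _ = T ^ (1 - θ) * (∑' i, x i ^ c) ^ (θ / c) := by
        rw [ENNReal.mul_rpow_of_nonneg _ _ (by positivity), ← ENNReal.rpow_mul]
        congr 2
        field_simp

end TsumRpow

section ElpE

variable {ι : Type*} {x : ι → ℝ≥0∞} {T : ℝ≥0∞} {p p₀ p₁ : ℝ≥0∞} {θ : ℝ}

lemma le_elpE (hp : 0 < p) (x : ι → ℝ≥0∞) (k : ι) : x k ≤ elpE p x := by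
  unfold elpE
  split_ifs with h
  · exact le_iSup x k
  · exact le_tsum_rpow_one_div (ENNReal.toReal_pos hp.ne' h) x k

lemma elpE_mono {y : ι → ℝ≥0∞} (h : ∀ k, x k ≤ y k) : elpE p x ≤ elpE p y := by
  unfold elpE
  split_ifs
  · exact iSup_mono h
  · gcongr with k
    exact h k

lemma elpE_const_mul (hp : 0 < p) (a : ℝ≥0∞) (x : ι → ℝ≥0∞) :
    elpE p (fun k => a * x k) = a * elpE p x := by
  unfold elpE
  split_ifs with h
  · exact (ENNReal.mul_iSup a x).symm
  · have hp' : 0 < p.toReal := ENNReal.toReal_pos hp.ne' h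
    simp_rw [ENNReal.mul_rpow_of_nonneg _ _ hp'.le, ENNReal.tsum_mul_left,
      ENNReal.mul_rpow_of_nonneg _ _ (one_div_pos.2 hp').le, ← ENNReal.rpow_mul,
      mul_one_div_cancel hp'.ne', rpow_one]

lemma elpE_le_rpow_mul (hp₀ : 0 < p₀) (hp₀' : p₀ ≠ ∞) (hp₁ : 0 < p₁) (hθ1 : θ ≤ 1)
    (hpθ : p₀.toReal / p₁.toReal ≤ θ) (hT : ∀ k, x k ≤ T) :
    elpE p₁ x ≤ T ^ (1 - θ) * elpE p₀ x ^ θ := by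
  have hp₀r : 0 < p₀.toReal := ENNReal.toReal_pos hp₀.ne' hp₀'
  by_cases hp₁' : p₁ = ∞
  · have hθ : 0 ≤ θ := (div_nonneg hp₀r.le ENNReal.toReal_nonneg).trans hpθ
    rw [hp₁', elpE, if_pos rfl]
    refine iSup_le fun k => ?_
    calc x k = x k ^ (1 - θ) * x k ^ θ := by
          rw [← ENNReal.rpow_add_of_nonneg _ _ (sub_nonneg.2 hθ1) hθ, sub_add_cancel, rpow_one]
      _ ≤ T ^ (1 - θ) * elpE p₀ x ^ θ := by
          gcongr
          exacts [hT k, le_elpE hp₀ x k]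
  · have hp₁r : 0 < p₁.toReal := ENNReal.toReal_pos hp₁.ne' hp₁'
    have hθ : 0 < θ := (div_pos hp₀r hp₁r).trans_le hpθ
    rw [elpE, if_neg hp₁', elpE, if_neg hp₀', ← ENNReal.rpow_mul, one_div_mul_eq_div]
    exact tsum_rpow_one_div_le_rpow_mul hp₀r hθ hθ1 ((div_le_iff₀' hθ).2 ((div_le_iff₀ hp₁r).1 hpθ))
      hT

lemma elpE_rpow_le (hp₀ : 0 < p₀) (hp₀' : p₀ ≠ ∞) (hp₁ : 0 < p₁)
    (hpθ : p₀.toReal / p₁.toReal ≤ θ) (x : ι → ℝ≥0∞) :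
    elpE p₁ (fun k => x k ^ θ) ≤ elpE p₀ x ^ θ := by
  have hp₀r : 0 < p₀.toReal := ENNReal.toReal_pos hp₀.ne' hp₀'
  by_cases hp₁' : p₁ = ∞
  · have hθ : 0 ≤ θ := (div_nonneg hp₀r.le ENNReal.toReal_nonneg).trans hpθ
    rw [hp₁', elpE, if_pos rfl]
    exact iSup_le fun k => ENNReal.rpow_le_rpow (le_elpE hp₀ x k) hθ
  · have hp₁r : 0 < p₁.toReal := ENNReal.toReal_pos hp₁.ne' hp₁'
    have hθ : 0 < θ := (div_pos hp₀r hp₁r).trans_le hpθ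
    rw [elpE, if_neg hp₁', elpE, if_neg hp₀']
    calc (∑' k, (x k ^ θ) ^ p₁.toReal) ^ (1 / p₁.toReal)
        = ((∑' k, x k ^ (θ * p₁.toReal)) ^ (1 / (θ * p₁.toReal))) ^ θ := by
          simp_rw [← ENNReal.rpow_mul]
          congr 1
          field_simp
      _ ≤ ((∑' k, x k ^ p₀.toReal) ^ (1 / p₀.toReal)) ^ θ := by
          gcongr
          exact tsum_rpow_one_div_le_of_le hp₀r ((div_le_iff₀ hp₁r).1 hpθ) x

end ElpE

section Elp2

variable {p₀ p₁ q₀ q₁ : ℝ≥0∞} {θ r : ℝ}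

lemma elp2_le_rpow_mul (hp₀ : 0 < p₀) (hp₀' : p₀ ≠ ∞) (hp₁ : 0 < p₁) (hq₀ : 0 < q₀)
    (hq₀' : q₀ ≠ ∞) (hq₁ : 0 < q₁) (hθ1 : θ ≤ 1) (hpθ : p₀.toReal / p₁.toReal ≤ θ)
    (hqθ : q₀.toReal / q₁.toReal ≤ θ) {z : ℕ → ℕ → ℝ} {T : ℝ≥0∞}
    (hT : ∀ j k, (‖z j k‖₊ : ℝ≥0∞) ≤ T) :
    elp2 p₁ q₁ z ≤ T ^ (1 - θ) * elp2 p₀ q₀ z ^ θ :=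
  calc elp2 p₁ q₁ z ≤ elpE q₁ fun j => T ^ (1 - θ) * elp p₀ (z j) ^ θ :=
        elpE_mono fun j => elpE_le_rpow_mul hp₀ hp₀' hp₁ hθ1 hpθ (hT j)
    _ = T ^ (1 - θ) * elpE q₁ fun j => elp p₀ (z j) ^ θ := elpE_const_mul hq₁ _ _
    _ ≤ T ^ (1 - θ) * elp2 p₀ q₀ z ^ θ := by
        gcongr
        exact elpE_rpow_le hq₀ hq₀' hq₁ hqθ _

lemma tsum_rpow_one_div_le_elp2 (hp₀ : 0 < p₀) (hp₀' : p₀ ≠ ∞) (hq₀ : 0 < q₀)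
    (hq₀' : q₀ ≠ ∞) (hpr : p₀.toReal ≤ r) (hqr : q₀.toReal ≤ r) (z : ℕ → ℕ → ℝ) :
    (∑' s : ℕ × ℕ, (‖z s.1 s.2‖₊ : ℝ≥0∞) ^ r) ^ (1 / r) ≤ elp2 p₀ q₀ z := by
  have hp₀r : 0 < p₀.toReal := ENNReal.toReal_pos hp₀.ne' hp₀'
  have hr : 0 < r := hp₀r.trans_le hpr
  have hinner : ∀ j, (∑' k, (‖z j k‖₊ : ℝ≥0∞) ^ r) ^ (1 / r) ≤ elp p₀ (z j) := fun j => by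
    rw [elp, elpE, if_neg hp₀']
    exact tsum_rpow_one_div_le_of_le hp₀r hpr _
  calc (∑' s : ℕ × ℕ, (‖z s.1 s.2‖₊ : ℝ≥0∞) ^ r) ^ (1 / r)
      = (∑' j, ((∑' k, (‖z j k‖₊ : ℝ≥0∞) ^ r) ^ (1 / r)) ^ r) ^ (1 / r) := by
        simp_rw [ENNReal.tsum_prod', ← ENNReal.rpow_mul, one_div_mul_cancel hr.ne', rpow_one]
    _ ≤ (∑' j, elp p₀ (z j) ^ r) ^ (1 / r) := by
        gcongr with j
        exact hinner j
    _ ≤ elp2 p₀ q₀ z := by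
        rw [elp2, elpE, if_neg hq₀']
        exact tsum_rpow_one_div_le_of_le (ENNReal.toReal_pos hq₀.ne' hq₀') hqr _

lemma card_rpow_mul_le_elp2 (hp₀ : 0 < p₀) (hp₀' : p₀ ≠ ∞) (hq₀ : 0 < q₀)
    (hq₀' : q₀ ≠ ∞) (hpr : p₀.toReal ≤ r) (hqr : q₀.toReal ≤ r) {z : ℕ → ℕ → ℝ}
    {T : ℝ≥0∞} {S : Finset (ℕ × ℕ)} (hS : ∀ s ∈ S, T ≤ (‖z s.1 s.2‖₊ : ℝ≥0∞)) :
    (S.card : ℝ≥0∞) ^ (1 / r) * T ≤ elp2 p₀ q₀ z := by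
  have hr : 0 < r := (ENNReal.toReal_pos hp₀.ne' hp₀').trans_le hpr
  calc (S.card : ℝ≥0∞) ^ (1 / r) * T = (∑ _s ∈ S, T ^ r) ^ (1 / r) := by
        rw [Finset.sum_const, nsmul_eq_mul, ENNReal.mul_rpow_of_nonneg _ _ (by positivity),
          ← ENNReal.rpow_mul, mul_one_div_cancel hr.ne', rpow_one]
    _ ≤ (∑' s : ℕ × ℕ, (‖z s.1 s.2‖₊ : ℝ≥0∞) ^ r) ^ (1 / r) := by
        gcongr
        exact (Finset.sum_le_sum fun s hs => by gcongr; exact hS s hs).trans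
          (ENNReal.sum_le_tsum S)
    _ ≤ elp2 p₀ q₀ z := tsum_rpow_one_div_le_elp2 hp₀ hp₀' hq₀ hq₀' hpr hqr z

lemma tendsto_uncurry_cofinite_zero_of_elp2_ne_top (hp₀ : 0 < p₀) (hp₀' : p₀ ≠ ∞)
    (hq₀ : 0 < q₀) (hq₀' : q₀ ≠ ∞) {z : ℕ → ℕ → ℝ} (hz : elp2 p₀ q₀ z ≠ ∞) :
    Tendsto (Function.uncurry z) cofinite (𝓝 0) := by
  set r := max p₀.toReal q₀.toReal
  have hr : 0 < r := lt_max_of_lt_left (ENNReal.toReal_pos hp₀.ne' hp₀')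
  have hsum : ∑' s : ℕ × ℕ, (‖z s.1 s.2‖₊ : ℝ≥0∞) ^ r ≠ ∞ := fun h => hz <| by
    have := tsum_rpow_one_div_le_elp2 hp₀ hp₀' hq₀ hq₀' (le_max_left _ _) (le_max_right _ _) z
    rwa [h, ENNReal.top_rpow_of_pos (by positivity), top_le_iff] at this
  have := ((ENNReal.continuous_rpow_const (y := 1 / r)).tendsto 0).comp
    (ENNReal.tendsto_cofinite_zero_of_tsum_ne_top hsum)
  simp only [Function.comp_def, ← ENNReal.rpow_mul, mul_one_div_cancel hr.ne', rpow_one,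
    ENNReal.zero_rpow_of_pos (one_div_pos.2 hr)] at this
  rw [tendsto_zero_iff_norm_tendsto_zero]
  exact NNReal.tendsto_coe.2 (ENNReal.tendsto_coe.1 this)

end Elp2

section PeakVectors

variable {ι : Type*} {x y : ι → ℝ} {S : Finset ι}

lemma finite_setOf_le_abs (hx : Tendsto x cofinite (𝓝 0)) {a : ℝ} (ha : 0 < a) :
    {i | a ≤ |x i|}.Finite := by
  simpa [Real.norm_eq_abs] using
    eventually_cofinite.1 ((tendsto_zero_iff_norm_tendsto_zero.1 hx).eventually (gt_mem_nhds ha))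

lemma exists_mem_ne_zero_forall_mem_eq_zero {V : Submodule ℝ (ι → ℝ)}
    (hS : S.card < Module.finrank ℝ V) : ∃ y ∈ V, y ≠ 0 ∧ ∀ i ∈ S, y i = 0 := by
  have : FiniteDimensional ℝ V := .of_finrank_pos (S.card.zero_le.trans_lt hS)
  let f : V →ₗ[ℝ] (S → ℝ) := LinearMap.funLeft ℝ ℝ ((↑) : S → ι) ∘ₗ V.subtype
  obtain ⟨⟨y, hyV⟩, hy, hy0⟩ := Submodule.exists_mem_ne_zero_of_ne_bot
    (LinearMap.ker_ne_bot_of_finrank_lt (f := f) (by simpa using hS))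
  refine ⟨y, hyV, fun h => hy0 (Subtype.ext h), fun i hi => congr_fun hy ⟨i, hi⟩⟩

lemma exists_abs_add_mul_eq_one (hx : Tendsto x cofinite (𝓝 0)) (hy : Tendsto y cofinite (𝓝 0))
    (hxS : ∀ i ∉ S, |x i| < 1) (hyS : ∀ i ∈ S, y i = 0) (hy0 : y ≠ 0) :
    ∃ c : ℝ, (∀ i ∉ S, |x i + c * y i| ≤ 1) ∧ ∃ i ∉ S, |x i + c * y i| = 1 := by
  classical
  obtain ⟨i₀, hi₀⟩ := Function.ne_iff.1 hy0
  have hi₀S : i₀ ∉ S := fun h => hi₀ (hyS i₀ h)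
  have hyi₀ : 0 < |y i₀| := abs_pos.2 hi₀
  set b := 2 / |y i₀|
  have hb : 0 < b := by positivity
  have hbyi₀ : b * |y i₀| = 2 := div_mul_cancel₀ _ hyi₀.ne'
  -- Off `S`, only the finitely many coordinates in `G` can reach `1` along `x + c • y`,
  -- `0 ≤ c ≤ b`; at `c = b` the coordinate `i₀` already exceeds `1`.
  set G := ((finite_setOf_le_abs hx (inv_pos.2 two_pos)).toFinset ∪
    (finite_setOf_le_abs hy (div_pos hyi₀ four_pos)).toFinset) \ S
  have hi₀G : i₀ ∈ G := by simp [G, hi₀S, div_le_self hyi₀.le (show (1 : ℝ) ≤ 4 by norm_num)]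
  have hsmall : ∀ i ∉ S, i ∉ G → ∀ c ∈ Icc 0 b, |x i + c * y i| < 1 := by
    intro i hiS hiG c ⟨hc0, hcb⟩
    have hxi : |x i| < 2⁻¹ := not_le.1 fun h => hiG (by simp [G, hiS, h])
    have hyi : |y i| < |y i₀| / 4 := not_le.1 fun h => hiG (by simp [G, hiS, h])
    calc |x i + c * y i| ≤ |x i| + c * |y i| := by
          rw [← abs_of_nonneg hc0, ← abs_mul, abs_of_nonneg hc0]; exact abs_add_le _ _
      _ < 2⁻¹ + b * (|y i₀| / 4) :=
          add_lt_add_of_lt_of_le hxi (mul_le_mul hcb hyi.le (abs_nonneg _) hb.le)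
      _ = 1 := by rw [← mul_div_assoc, hbyi₀]; norm_num
  set g : ℝ → ℝ := fun c => G.sup' ⟨i₀, hi₀G⟩ fun i => |x i + c * y i|
  have hg : Continuous g := Continuous.finset_sup'_apply _ fun i _ => by fun_prop
  have hg0 : g 0 ≤ 1 := (Finset.sup'_lt_iff _).2 (fun i hi => by
    simpa using hxS i (Finset.mem_sdiff.1 hi).2) |>.le
  have hgb : 1 ≤ g b := Finset.le_sup'_of_le _ hi₀G <| by
    have := abs_sub_abs_le_abs_add (b * y i₀) (x i₀)
    rw [abs_mul, abs_of_pos hb, hbyi₀, add_comm] at this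
    linarith [hxS i₀ hi₀S]
  obtain ⟨c, hc, hgc⟩ := intermediate_value_Icc hb.le hg.continuousOn ⟨hg0, hgb⟩
  refine ⟨c, fun i hiS => ?_, ?_⟩
  · by_cases hiG : i ∈ G
    · exact hgc ▸ Finset.le_sup' (fun i => |x i + c * y i|) hiG
    · exact (hsmall i hiS hiG c hc).le
  · obtain ⟨i, hiG, hi⟩ := Finset.exists_mem_eq_sup' ⟨i₀, hi₀G⟩ fun i => |x i + c * y i|
    exact ⟨i, (Finset.mem_sdiff.1 hiG).2, hi ▸ hgc⟩

def IsPeakSet (x : ι → ℝ) (S : Finset ι) : Prop := (∀ i, |x i| ≤ 1) ∧ ∀ i ∈ S, |x i| = 1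

lemma IsPeakSet.coe_nnnorm_le_one (hx : IsPeakSet x S) (i : ι) : (‖x i‖₊ : ℝ≥0∞) ≤ 1 := by
  simpa [← NNReal.coe_le_coe, Real.norm_eq_abs] using hx.1 i

lemma IsPeakSet.one_le_coe_nnnorm (hx : IsPeakSet x S) {i : ι} (hi : i ∈ S) :
    1 ≤ (‖x i‖₊ : ℝ≥0∞) := by
  simpa [← NNReal.coe_le_coe, Real.norm_eq_abs] using (hx.2 i hi).ge

variable {V : Submodule ℝ (ι → ℝ)}

lemma IsPeakSet.exists_card_succ (hV : ∀ x ∈ V, Tendsto x cofinite (𝓝 0)) (hxV : x ∈ V)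
    (hx : IsPeakSet x S) (hS : S.card < Module.finrank ℝ V) :
    ∃ w ∈ V, ∃ T : Finset ι, T.card = S.card + 1 ∧ IsPeakSet w T := by
  by_cases h : ∃ i ∉ S, |x i| = 1
  · obtain ⟨i, hiS, hi⟩ := h
    exact ⟨x, hxV, S.cons i hiS, S.card_cons hiS, hx.1, by simpa [hi] using hx.2⟩
  -- No coordinate off `S` is at `1` yet: move along a nonzero `y ∈ V` vanishing on `S`.
  push Not at h
  obtain ⟨y, hyV, hy0, hyS⟩ := exists_mem_ne_zero_forall_mem_eq_zero hS
  obtain ⟨c, hc, i, hiS, hi⟩ := exists_abs_add_mul_eq_one (hV x hxV) (hV y hyV)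
    (fun i hi => (hx.1 i).lt_of_ne (h i hi)) hyS hy0
  refine ⟨x + c • y, add_mem hxV (V.smul_mem c hyV), S.cons i hiS, S.card_cons hiS,
    fun j => ?_, ?_⟩
  · by_cases hj : j ∈ S
    · simpa [hyS j hj] using hx.1 j
    · exact hc j hj
  · exact (Finset.forall_mem_cons hiS _).2
      ⟨by simpa using hi, fun j hj => by simpa [hyS j hj] using hx.2 j hj⟩

lemma exists_isPeakSet_card_eq (hV : ∀ x ∈ V, Tendsto x cofinite (𝓝 0)) {k : ℕ}
    (hk : k ≤ Module.finrank ℝ V) : ∃ x ∈ V, ∃ S : Finset ι, S.card = k ∧ IsPeakSet x S := by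
  induction k with
  | zero => exact ⟨0, V.zero_mem, ∅, rfl, by simp, by simp⟩
  | succ k ih =>
    obtain ⟨x, hxV, S, rfl, hx⟩ := ih (by omega)
    exact hx.exists_card_succ hV hxV hk

end PeakVectors

section Bernstein

variable {p₀ p₁ q₀ q₁ : ℝ≥0∞}

lemma elp2_nnreal_smul {p q : ℝ≥0∞} (hp : 0 < p) (hq : 0 < q) (c : ℝ≥0) (x : ℕ → ℕ → ℝ) :
    elp2 p q ((c : ℝ) • x) = c * elp2 p q x := by
  simp only [elp2, elp, Pi.smul_apply, smul_eq_mul, nnnorm_mul, NNReal.nnnorm_eq,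
    ENNReal.coe_mul, elpE_const_mul hp, elpE_const_mul hq]

lemma exists_mem_card_eq_isPeakSet_uncurry (hp₀ : 0 < p₀) (hp₀' : p₀ ≠ ∞) (hq₀ : 0 < q₀)
    (hq₀' : q₀ ≠ ∞) {V : Submodule ℝ (ℕ → ℕ → ℝ)} (hV : ∀ x ∈ V, elp2 p₀ q₀ x ≠ ∞) :
    ∃ x ∈ V, ∃ S : Finset (ℕ × ℕ), S.card = Module.finrank ℝ V ∧
      IsPeakSet (Function.uncurry x) S := by
  set V' := V.map ((LinearEquiv.curry ℝ ℝ ℕ ℕ).symm : (ℕ → ℕ → ℝ) →ₗ[ℝ] (ℕ × ℕ → ℝ))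
  have hV' : ∀ x' ∈ V', Tendsto x' cofinite (𝓝 0) := by
    rintro _ ⟨x, hxV, rfl⟩
    exact tendsto_uncurry_cofinite_zero_of_elp2_ne_top hp₀ hp₀' hq₀ hq₀' (hV x hxV)
  have hrank : Module.finrank ℝ V' = Module.finrank ℝ V := LinearEquiv.finrank_map_eq _ _
  obtain ⟨_, ⟨x, hxV, rfl⟩, S, hSn, hx⟩ := exists_isPeakSet_card_eq hV' hrank.ge
  exact ⟨x, hxV, S, hSn, hx⟩

lemma bern_elp2_le_rpow (hp₀ : 0 < p₀) (hp₀' : p₀ ≠ ∞) (hp₁ : 0 < p₁) (hq₀ : 0 < q₀)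
    (hq₀' : q₀ ≠ ∞) (hq₁ : 0 < q₁) {θ s : ℝ} (hθ1 : θ ≤ 1) (hpθ : p₀.toReal / p₁.toReal ≤ θ)
    (hqθ : q₀.toReal / q₁.toReal ≤ θ) (hs : 0 < s) (hsp : s ≤ 1 / p₀.toReal)
    (hsq : s ≤ 1 / q₀.toReal) {n : ℕ} (hn : 1 ≤ n) :
    bern (elp2 p₀ q₀) (elp2 p₁ q₁) n ≤ (n : ℝ≥0∞) ^ (-(s * (1 - θ))) := by
  have hp₀r : 0 < p₀.toReal := ENNReal.toReal_pos hp₀.ne' hp₀'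
  have hq₀r : 0 < q₀.toReal := ENNReal.toReal_pos hq₀.ne' hq₀'
  refine iSup_le fun ⟨V, hVn, hVfin⟩ => ?_
  obtain ⟨x, hxV, S, hSn, hx⟩ := exists_mem_card_eq_isPeakSet_uncurry hp₀ hp₀' hq₀ hq₀' hVfin
  set N := elp2 p₀ q₀ x
  have hnN : (n : ℝ≥0∞) ^ s ≤ N := by
    have := card_rpow_mul_le_elp2 hp₀ hp₀' hq₀ hq₀' ((le_one_div hp₀r hs).2 hsp)
      ((le_one_div hq₀r hs).2 hsq) fun i hi => hx.one_le_coe_nnnorm hi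
    rwa [hSn, hVn, one_div_one_div, mul_one] at this
  have hN0 : N ≠ 0 := (lt_of_lt_of_le (ENNReal.rpow_pos (by exact_mod_cast hn) (by simp)) hnN).ne'
  have hNtop : N ≠ ∞ := hVfin x hxV
  set c : ℝ≥0 := N.toNNReal⁻¹
  have hNinv : (c : ℝ≥0∞) = N⁻¹ := by
    rw [ENNReal.coe_inv (by simp [ENNReal.toNNReal_eq_zero_iff, hN0, hNtop]),
      ENNReal.coe_toNNReal hNtop]
  refine iInf_le_of_le ⟨(c : ℝ) • x, V.smul_mem _ hxV, ?_⟩ ?_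
  · rw [elp2_nnreal_smul hp₀ hq₀, hNinv, ENNReal.inv_mul_cancel hN0 hNtop]
  calc elp2 p₁ q₁ ((c : ℝ) • x) = N⁻¹ * elp2 p₁ q₁ x := by
        rw [elp2_nnreal_smul hp₁ hq₁, hNinv]
    _ ≤ N⁻¹ * N ^ θ := by
        gcongr
        simpa using elp2_le_rpow_mul hp₀ hp₀' hp₁ hq₀ hq₀' hq₁ hθ1 hpθ hqθ
          fun j k => hx.coe_nnnorm_le_one (j, k)
    _ = (N ^ (1 - θ))⁻¹ := by
        rw [← ENNReal.rpow_neg_one, ← ENNReal.rpow_add _ _ hN0 hNtop, ← ENNReal.rpow_neg,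
          neg_sub', sub_neg_eq_add, add_comm]
    _ ≤ (((n : ℝ≥0∞) ^ s) ^ (1 - θ))⁻¹ := by gcongr
    _ = (n : ℝ≥0∞) ^ (-(s * (1 - θ))) := by rw [← ENNReal.rpow_mul, ENNReal.rpow_neg]

end Bernstein

lemma toReal_div_toReal_lt_one {a b : ℝ≥0∞} (ha : 0 < a) (hab : a < b) :
    a.toReal / b.toReal < 1 := by
  rcases eq_or_ne b ∞ with rfl | hb
  · simp
  · exact (div_lt_one (ENNReal.toReal_pos (ha.trans hab).ne' hb)).2
      (ENNReal.toReal_strict_mono hb hab)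

lemma tendsto_natCast_rpow_neg_atTop {α : ℝ} (hα : 0 < α) :
    Tendsto (fun n : ℕ => (n : ℝ≥0∞) ^ (-α)) atTop (𝓝 0) := by
  have := ((ENNReal.continuous_rpow_const (y := α)).tendsto 0).comp
    ENNReal.tendsto_inv_nat_nhds_zero
  simpa [Function.comp_def, ENNReal.inv_rpow, ← ENNReal.rpow_neg,
    ENNReal.zero_rpow_of_pos hα] using this

theorem bernstein_elp2_le (p₀ p₁ q₀ q₁ : ℝ≥0∞)
    (hp₀ : 0 < p₀) (hp : p₀ < p₁) (hq₀ : 0 < q₀) (hq : q₀ < q₁) :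
    (∀ n : ℕ, 1 ≤ n →
      bern (elp2 p₀ q₀) (elp2 p₁ q₁) n ≤
        (n : ℝ≥0∞) ^ (-(min (1 / p₀.toReal) (1 / q₀.toReal) *
          (1 - max (q₀.toReal / q₁.toReal) (p₀.toReal / p₁.toReal))))) ∧
    Tendsto (bern (elp2 p₀ q₀) (elp2 p₁ q₁)) atTop (nhds 0) := by
  have hp₀r : 0 < p₀.toReal := ENNReal.toReal_pos hp₀.ne' hp.ne_top
  have hq₀r : 0 < q₀.toReal := ENNReal.toReal_pos hq₀.ne' hq.ne_top
  have hθ : max (q₀.toReal / q₁.toReal) (p₀.toReal / p₁.toReal) < 1 :=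
    max_lt (toReal_div_toReal_lt_one hq₀ hq) (toReal_div_toReal_lt_one hp₀ hp)
  have hs : 0 < min (1 / p₀.toReal) (1 / q₀.toReal) := lt_min (by positivity) (by positivity)
  have hbound := fun n (hn : 1 ≤ n) =>
    bern_elp2_le_rpow hp₀ hp.ne_top (hp₀.trans hp) hq₀ hq.ne_top (hq₀.trans hq) hθ.le
      (le_max_right _ _) (le_max_left _ _) hs (min_le_left _ _) (min_le_right _ _) hn
  exact ⟨hbound, tendsto_of_tendsto_of_tendsto_of_le_of_le' tendsto_const_nhds
    (tendsto_natCast_rpow_neg_atTop (mul_pos hs (sub_pos.2 hθ)))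
    (Eventually.of_forall fun _ => zero_le) ((eventually_ge_atTop 1).mono hbound)⟩
end

section
/- Let 0 < p_1 ≤ p_0 < ∞, 0 < q_0 < q_1 ≤ ∞, and A ≥ 0. Then the inclusion ℓ^{q_0}(2^{-j/p_0}·ℓ^{p_0}{1,...,2^j})_{j≥A} ↪ ℓ^{q_1}(2^{-j/p_1}·ℓ^{p_1}{1,...,2^j})_{j≥A} is not finitely strictly singular: there is a constant c > 0 such that b_n of this inclusion is ≥ c for all n. -/
open MeasureTheory Set ENNReal Filter

/-- The norm of `ℓ^q(2^{-j/p}·ℓ^p{1,…,2^j})_{j ≥ A}` on block sequences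
(the `j`-th block, `j ≥ A`, indexed here by `j = A + i`, has length `2^{A+i}`). -/
noncomputable def blockNorm (p q : ℝ≥0∞) (A : ℕ)
    (x : (i : ℕ) → Fin (2 ^ (A + i)) → ℝ) : ℝ≥0∞ :=
  elpE q fun i : ℕ => (2 : ℝ≥0∞) ^ (-(((A + i : ℕ) : ℝ) / p.toReal)) * elp p (x i)

/-!
The `n`-th Bernstein number is bounded below by means of the `n`-dimensional space of Rademacher
sums `∑ aᵢ rᵢ` placed in the single block `j = A + n`, whose `2^(A+n)` coordinates are identified
with the cube `{±1}ⁿ × {±1}^A`. On such vectors both block norms are normalized `Lᵖ` norms on the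
cube, with exponents `p₀` and `p₁`. Khintchine's inequality makes all these norms equivalent on
Rademacher sums, with constants independent of the dimension, which bounds every `bₙ` from below by
one positive constant.

Khintchine's inequality is proved from the exponential moment `𝔼 exp (∑ aᵢ rᵢ) = ∏ cosh aᵢ`, which
is at most `exp (∑ aᵢ² / 2)`: it bounds every moment from above, and Jensen's inequality together
with Cauchy–Schwarz turns the upper bounds and `𝔼 (∑ aᵢ rᵢ)² = ∑ aᵢ²` into lower bounds.
-/

open Finset
open scoped BigOperators

section Cube
variable {ι κ : Type*} [Fintype ι] [DecidableEq ι] [Fintype κ]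

lemma expect_prod_eq_prod_expect (g : ι → κ → ℝ) :
    𝔼 ω : ι → κ, ∏ i, g i (ω i) = ∏ i, 𝔼 x, g i x := by
  simp only [expect_eq_sum_div_card, card_univ, Fintype.card_fun, ← Fintype.prod_sum,
    Finset.prod_div_distrib, Finset.prod_const, Nat.cast_pow]

lemma pow_expect_le_expect_pow {g : κ → ℝ} (hg : ∀ x, 0 ≤ g x) {n : ℕ} (hn : n ≠ 0) :
    (𝔼 x, g x) ^ n ≤ 𝔼 x, g x ^ n := by
  obtain ⟨n, rfl⟩ := Nat.exists_eq_succ_of_ne_zero hn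
  simp only [expect_eq_sum_div_card]
  calc ((∑ x, g x) / #univ) ^ (n + 1)
      = (∑ x, g x) ^ (n + 1) / #(univ : Finset κ) ^ n / #univ := by
        rw [div_pow, div_div, ← pow_succ]
    _ ≤ (∑ x, g x ^ (n + 1)) / #univ := by
        gcongr
        exact pow_sum_div_card_le_sum_pow (fun x _ => hg x) n

lemma expect_bool (f : Bool → ℝ) : 𝔼 b, f b = (f true + f false) / 2 := by
  simp [expect_eq_sum_div_card, add_comm]

end Cube

section AvgLpNorm
variable {Ω : Type*} [Fintype Ω]

noncomputable def avgLpNorm (r : ℝ) (g : Ω → ℝ) : ℝ := (𝔼 ω, |g ω| ^ r) ^ r⁻¹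

lemma avgLpNorm_zero {r : ℝ} (hr : 0 < r) : avgLpNorm r (0 : Ω → ℝ) = 0 := by
  simp [avgLpNorm, Real.zero_rpow hr.ne', hr.ne']

lemma avgLpNorm_smul {r : ℝ} (hr : 0 < r) (c : ℝ) (g : Ω → ℝ) :
    avgLpNorm r (c • g) = |c| * avgLpNorm r g := by
  simp only [avgLpNorm, Pi.smul_apply, smul_eq_mul, abs_mul,
    Real.mul_rpow (abs_nonneg c) (abs_nonneg _), ← mul_expect]
  rw [Real.mul_rpow (by positivity) (expect_nonneg fun ω _ => by positivity),
    ← Real.rpow_mul (abs_nonneg c), mul_inv_cancel₀ hr.ne', Real.rpow_one]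

lemma avgLpNorm_comp_equiv {Ω' : Type*} [Fintype Ω'] (e : Ω' ≃ Ω) (r : ℝ) (g : Ω → ℝ) :
    avgLpNorm r (g ∘ e) = avgLpNorm r g := by
  simp only [avgLpNorm, Function.comp_apply,
    Fintype.expect_equiv e _ (fun ω => |g ω| ^ r) fun _ => rfl]

lemma avgLpNorm_comp_fst {Θ : Type*} [Fintype Θ] [Nonempty Θ] (r : ℝ) (g : Ω → ℝ) :
    avgLpNorm r (g ∘ Prod.fst : Ω × Θ → ℝ) = avgLpNorm r g := by
  rw [avgLpNorm, avgLpNorm, ← univ_product_univ, expect_product]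
  simp

end AvgLpNorm

lemma abs_rpow_le_mul_exp_abs {r : ℝ} (hr : 0 < r) (x : ℝ) : |x| ^ r ≤ r ^ r * Real.exp |x| := by
  have h : (|x| / r) ^ r ≤ Real.exp (|x| / r) ^ r := by
    gcongr
    linarith [Real.add_one_le_exp (|x| / r)]
  rw [← Real.exp_mul, div_mul_cancel₀ _ hr.ne', Real.div_rpow (abs_nonneg x) hr.le,
    div_le_iff₀ (by positivity)] at h
  linarith

lemma exists_pos_smul_sum_sq_eq_one {ι : Type*} [Fintype ι] {a : ι → ℝ} (ha : a ≠ 0) :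
    ∃ σ : ℝ, 0 < σ ∧ ∃ b : ι → ℝ, ∑ i, b i ^ 2 = 1 ∧ a = σ • b := by
  have hS : 0 < ∑ i, a i ^ 2 := by
    obtain ⟨i, hi⟩ := Function.ne_iff.1 ha
    exact sum_pos' (fun i _ => sq_nonneg _) ⟨i, Finset.mem_univ i, sq_pos_of_ne_zero hi⟩
  have hσ : 0 < √(∑ i, a i ^ 2) := Real.sqrt_pos.2 hS
  refine ⟨_, hσ, (√(∑ i, a i ^ 2))⁻¹ • a, ?_, by rw [smul_smul, mul_inv_cancel₀ hσ.ne', one_smul]⟩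
  simp only [Pi.smul_apply, smul_eq_mul, mul_pow, ← mul_sum, inv_pow,
    Real.sq_sqrt (sum_nonneg fun i _ => sq_nonneg (a i))]
  exact inv_mul_cancel₀ hS.ne'

section Rademacher
variable {ι : Type*} [Fintype ι]

def rademacher (i : ι) (ω : ι → Bool) : ℝ := if ω i then 1 else -1

def rademacherSum : (ι → ℝ) →ₗ[ℝ] (ι → Bool) → ℝ := Fintype.linearCombination ℝ rademacher

lemma rademacherSum_apply (a : ι → ℝ) (ω : ι → Bool) :
    rademacherSum a ω = ∑ i, a i * rademacher i ω := by
  simp [rademacherSum, Fintype.linearCombination_apply]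

variable [DecidableEq ι]

lemma expect_rademacher_mul_rademacher (i j : ι) :
    𝔼 ω, rademacher i ω * rademacher j ω = if i = j then 1 else 0 := by
  split_ifs with hij
  · subst hij
    have hsq : ∀ ω : ι → Bool, rademacher i ω * rademacher i ω = 1 := fun ω => by
      unfold rademacher; split_ifs <;> norm_num
    simp [hsq]
  · have hprod : ∀ ω : ι → Bool, rademacher i ω * rademacher j ω =
        ∏ k, (if k = i then rademacher k ω else 1) * (if k = j then rademacher k ω else 1) := by
      intro ω
      rw [prod_mul_distrib, prod_ite_eq', prod_ite_eq', if_pos (Finset.mem_univ _),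
        if_pos (Finset.mem_univ _)]
    simp_rw [hprod, rademacher, expect_prod_eq_prod_expect fun k (b : Bool) =>
      (if k = i then (if b then 1 else -1 : ℝ) else 1) *
        (if k = j then (if b then 1 else -1) else 1)]
    exact prod_eq_zero (Finset.mem_univ i) <| by
      simp only [if_neg hij, mul_one, expect_bool]; norm_num

lemma expect_rademacherSum_sq (a : ι → ℝ) : 𝔼 ω, rademacherSum a ω ^ 2 = ∑ i, a i ^ 2 := by
  simp_rw [rademacherSum_apply, sq, sum_mul_sum, expect_sum_comm, mul_mul_mul_comm (a _),
    ← mul_expect, expect_rademacher_mul_rademacher, mul_ite, mul_one, mul_zero, sum_ite_eq,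
    Finset.mem_univ, if_true]

lemma rademacherSum_injective :
    Function.Injective (rademacherSum : (ι → ℝ) → (ι → Bool) → ℝ) := by
  refine (injective_iff_map_eq_zero _).2 fun a ha => ?_
  have h := expect_rademacherSum_sq a
  simp only [ha, Pi.zero_apply, zero_pow two_ne_zero, expect_const_zero] at h
  funext i
  exact pow_eq_zero_iff two_ne_zero |>.1 <|
    (sum_eq_zero_iff_of_nonneg fun i _ => sq_nonneg (a i)).1 h.symm i (Finset.mem_univ i)

lemma expect_exp_rademacherSum (a : ι → ℝ) :
    𝔼 ω, Real.exp (rademacherSum a ω) = ∏ i, Real.cosh (a i) := by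
  simp_rw [rademacherSum_apply, Real.exp_sum, rademacher,
    expect_prod_eq_prod_expect fun i (b : Bool) => Real.exp (a i * if b then 1 else -1),
    expect_bool, Real.cosh_eq]
  simp [div_eq_mul_inv]

lemma expect_exp_abs_rademacherSum_le (a : ι → ℝ) :
    𝔼 ω, Real.exp |rademacherSum a ω| ≤ 2 * Real.exp ((∑ i, a i ^ 2) / 2) := by
  have hcosh : ∏ i, Real.cosh (a i) ≤ Real.exp ((∑ i, a i ^ 2) / 2) := by
    rw [sum_div, Real.exp_sum]
    exact prod_le_prod (fun i _ => (Real.cosh_pos _).le) fun i _ => Real.cosh_le_exp_half_sq _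
  have hneg := expect_exp_rademacherSum (-a)
  simp only [map_neg, Pi.neg_apply, Real.cosh_neg] at hneg
  calc 𝔼 ω, Real.exp |rademacherSum a ω|
      ≤ 𝔼 ω, (Real.exp (rademacherSum a ω) + Real.exp (-rademacherSum a ω)) :=
        expect_le_expect fun ω _ => Real.exp_abs_le _
    _ = 2 * ∏ i, Real.cosh (a i) := by
        rw [expect_add_distrib, expect_exp_rademacherSum, hneg, two_mul]
    _ ≤ 2 * Real.exp ((∑ i, a i ^ 2) / 2) := by gcongr

lemma expect_abs_rademacherSum_rpow_le {r : ℝ} (hr : 0 < r) (a : ι → ℝ) :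
    𝔼 ω, |rademacherSum a ω| ^ r ≤ 2 * r ^ r * Real.exp ((∑ i, a i ^ 2) / 2) :=
  calc 𝔼 ω, |rademacherSum a ω| ^ r ≤ 𝔼 ω, r ^ r * Real.exp |rademacherSum a ω| :=
        expect_le_expect fun ω _ => abs_rpow_le_mul_exp_abs hr _
    _ ≤ r ^ r * (2 * Real.exp ((∑ i, a i ^ 2) / 2)) := by
        rw [← mul_expect]; gcongr; exact expect_exp_abs_rademacherSum_le a
    _ = 2 * r ^ r * Real.exp ((∑ i, a i ^ 2) / 2) := by ring

lemma avgLpNorm_rademacherSum_le {r : ℝ} (hr : 0 < r) {a : ι → ℝ} (ha : ∑ i, a i ^ 2 = 1) :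
    avgLpNorm r (rademacherSum a) ≤ (2 * r ^ r * Real.exp (1 / 2)) ^ r⁻¹ := by
  have h := expect_abs_rademacherSum_rpow_le hr a
  rw [ha] at h
  exact Real.rpow_le_rpow (expect_nonneg fun ω _ => by positivity) h (by positivity)

/-- Jensen gives `𝔼 f^(2N) ≥ (𝔼 f²)^N = 1`, and Cauchy–Schwarz applied to
`f^(2N) = |f|^(s/2) · |f|^(2N - s/2)` bounds `𝔼 f^(2N)` by the `s`-th and `(4N - s)`-th moments. -/
lemma inv_le_expect_abs_rademacherSum_rpow {s : ℝ} (hs : 0 < s) {N : ℕ} (hN : s < 4 * N)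
    {a : ι → ℝ} (ha : ∑ i, a i ^ 2 = 1) :
    (2 * (4 * N - s) ^ (4 * N - s) * Real.exp (1 / 2))⁻¹ ≤ 𝔼 ω, |rademacherSum a ω| ^ s := by
  set f := rademacherSum a
  have hN0 : (N : ℝ) ≠ 0 := by rintro h; rw [h] at hN; linarith
  have hsq : ∀ ω (y : ℝ), (|f ω| ^ y) ^ 2 = |f ω| ^ (y * 2) := fun ω y => by
    simpa using (Real.rpow_mul_natCast (abs_nonneg (f ω)) y 2).symm
  have hsplit : ∀ ω, (f ω ^ 2) ^ N = |f ω| ^ (s / 2) * |f ω| ^ (2 * N - s / 2) := fun ω => by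
    rw [← Real.rpow_add' (abs_nonneg _) (by simpa using hN0), ← sq_abs, ← pow_mul,
      ← Real.rpow_natCast]
    push_cast; ring_nf
  have h4N : (2 * N * 2 : ℝ) = 4 * N := by ring
  have hupper := expect_abs_rademacherSum_rpow_le (r := 4 * N - s) (by linarith) a
  rw [ha] at hupper
  rw [inv_le_iff_one_le_mul₀ (by positivity)]
  calc (1 : ℝ) ≤ (𝔼 ω, (f ω ^ 2) ^ N) ^ 2 := by
        have := pow_expect_le_expect_pow (fun ω => sq_nonneg (f ω)) (Nat.cast_ne_zero.1 hN0)
        rw [expect_rademacherSum_sq, ha, one_pow] at this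
        nlinarith
    _ ≤ (𝔼 ω, |f ω| ^ s) * 𝔼 ω, |f ω| ^ (4 * N - s) := by
        simpa only [← hsplit, hsq, div_mul_cancel₀ s two_ne_zero, sub_mul, h4N] using
          expect_mul_sq_le_sq_mul_sq univ (fun ω => |f ω| ^ (s / 2))
            (fun ω => |f ω| ^ (2 * N - s / 2))
    _ ≤ (𝔼 ω, |f ω| ^ s) * (2 * (4 * N - s) ^ (4 * N - s) * Real.exp (1 / 2)) := by
        gcongr

end Rademacher

lemma exists_mul_avgLpNorm_rademacherSum_le {s t : ℝ} (hs : 0 < s) (ht : 0 < t) :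
    ∃ c > 0, ∀ {ι : Type*} [Fintype ι] [DecidableEq ι] (a : ι → ℝ),
      c * avgLpNorm t (rademacherSum a) ≤ avgLpNorm s (rademacherSum a) := by
  obtain ⟨N, hN⟩ := exists_nat_gt s
  set K := 2 * (4 * N - s) ^ (4 * N - s) * Real.exp (1 / 2)
  set U := (2 * t ^ t * Real.exp (1 / 2)) ^ t⁻¹
  have hK : 0 < K := by
    have := Real.rpow_pos_of_pos (by linarith : (0 : ℝ) < 4 * N - s) (4 * N - s)
    positivity
  have hL : 0 < K⁻¹ ^ s⁻¹ := Real.rpow_pos_of_pos (inv_pos.2 hK) _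
  have hU : 0 < U := by positivity
  refine ⟨K⁻¹ ^ s⁻¹ / U, div_pos hL hU, fun {ι} _ _ a => ?_⟩
  rcases eq_or_ne a 0 with rfl | ha
  · simp [avgLpNorm_zero hs, avgLpNorm_zero ht]
  obtain ⟨σ, hσ, b, hb, rfl⟩ := exists_pos_smul_sum_sq_eq_one ha
  rw [map_smul, avgLpNorm_smul hs, avgLpNorm_smul ht, abs_of_pos hσ, mul_left_comm]
  gcongr
  calc K⁻¹ ^ s⁻¹ / U * avgLpNorm t (rademacherSum b) ≤ K⁻¹ ^ s⁻¹ / U * U := by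
        gcongr
        exact avgLpNorm_rademacherSum_le ht hb
    _ = K⁻¹ ^ s⁻¹ := div_mul_cancel₀ _ hU.ne'
    _ ≤ avgLpNorm s (rademacherSum b) :=
        Real.rpow_le_rpow (inv_pos.2 hK).le
          (inv_le_expect_abs_rademacherSum_rpow hs (by linarith) hb) (by positivity)

section BlockNorm
open ENNReal

lemma elpE_eq_of_forall_ne {ι : Type*} {q : ℝ≥0∞} (hq : q ≠ 0) {y : ι → ℝ≥0∞} (n : ι)
    (hy : ∀ i ≠ n, y i = 0) : elpE q y = y n := by
  rcases eq_or_ne q ∞ with rfl | hq'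
  · rw [elpE, if_pos rfl]
    refine le_antisymm (iSup_le fun i => ?_) (le_iSup y n)
    rcases eq_or_ne i n with rfl | hi
    · exact le_rfl
    · simp [hy i hi]
  · have hqt : 0 < q.toReal := toReal_pos hq hq'
    rw [elpE, if_neg hq', tsum_eq_single n fun i hi => by rw [hy i hi, zero_rpow_of_pos hqt],
      ← ENNReal.rpow_mul, mul_one_div_cancel hqt.ne', ENNReal.rpow_one]

lemma elp_eq_ofReal {ι : Type*} [Fintype ι] {p : ℝ≥0∞} (hp : p ≠ 0) (hp' : p ≠ ∞)
    (x : ι → ℝ) : elp p x = ENNReal.ofReal ((∑ k, |x k| ^ p.toReal) ^ (1 / p.toReal)) := by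
  have hpt : 0 < p.toReal := toReal_pos hp hp'
  rw [elp, elpE, if_neg hp', tsum_fintype, ← ofReal_rpow_of_nonneg (by positivity) (by positivity),
    ofReal_sum_of_nonneg fun k _ => by positivity]
  congr 2 with k
  rw [← ofReal_rpow_of_nonneg (abs_nonneg _) hpt.le, ← Real.enorm_eq_ofReal_abs, enorm_eq_nnnorm]

lemma blockNorm_single {p q : ℝ≥0∞} (hp : p ≠ 0) (hp' : p ≠ ∞) (hq : q ≠ 0) (A n : ℕ)
    (x : Fin (2 ^ (A + n)) → ℝ) :
    blockNorm p q A (Pi.single n x) = ENNReal.ofReal (avgLpNorm p.toReal x) := by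
  have hpt : 0 < p.toReal := toReal_pos hp hp'
  rw [blockNorm, elpE_eq_of_forall_ne hq n fun i hi => by
    simp [Pi.single_eq_of_ne hi, elp_eq_ofReal hp hp', Real.zero_rpow hpt.ne', hpt.ne']]
  have hsum : 0 ≤ ∑ k, |x k| ^ p.toReal := sum_nonneg fun k _ => by positivity
  have hweight : (2 : ℝ≥0∞) ^ (-(((A + n : ℕ) : ℝ) / p.toReal))
      = ENNReal.ofReal (((2 : ℝ) ^ (A + n)) ^ p.toReal⁻¹)⁻¹ := by
    rw [← Real.rpow_natCast, ← Real.rpow_mul zero_le_two, ← Real.rpow_neg zero_le_two,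
      ← ofReal_rpow_of_pos two_pos, ofReal_ofNat, div_eq_mul_inv]
  rw [Pi.single_eq_same, elp_eq_ofReal hp hp', hweight, ← ofReal_mul (by positivity), avgLpNorm,
    expect_eq_sum_div_card, card_univ, Fintype.card_fin, Real.div_rpow hsum (by positivity),
    one_div, div_eq_inv_mul, Nat.cast_pow, Nat.cast_ofNat]

end BlockNorm

noncomputable def cubeBlockEquiv (A n : ℕ) :
    Fin (2 ^ (A + n)) ≃ (Fin n → Bool) × (Fin A → Bool) :=
  Fintype.equivOfCardEq (by simp [pow_add, mul_comm])

noncomputable def rademacherBlock (A n : ℕ) :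
    (Fin n → ℝ) →ₗ[ℝ] (i : ℕ) → Fin (2 ^ (A + i)) → ℝ :=
  LinearMap.single ℝ (fun i => Fin (2 ^ (A + i)) → ℝ) n ∘ₗ
    LinearMap.funLeft ℝ ℝ (Prod.fst ∘ cubeBlockEquiv A n) ∘ₗ rademacherSum

lemma rademacherBlock_injective (A n : ℕ) : Function.Injective (rademacherBlock A n) :=
  (Pi.single_injective n).comp <|
    (LinearMap.funLeft_injective_of_surjective ℝ ℝ _
      (Prod.fst_surjective.comp (cubeBlockEquiv A n).surjective)).comp rademacherSum_injective

lemma blockNorm_rademacherBlock {p q : ℝ≥0∞} (hp : p ≠ 0) (hp' : p ≠ ∞) (hq : q ≠ 0) (A n : ℕ)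
    (a : Fin n → ℝ) :
    blockNorm p q A (rademacherBlock A n a) =
      ENNReal.ofReal (avgLpNorm p.toReal (rademacherSum a)) := by
  have hfun : LinearMap.funLeft ℝ ℝ (Prod.fst ∘ cubeBlockEquiv A n) (rademacherSum a)
      = (rademacherSum a ∘ Prod.fst) ∘ cubeBlockEquiv A n := rfl
  rw [rademacherBlock, LinearMap.comp_apply, LinearMap.comp_apply, LinearMap.single_apply,
    blockNorm_single hp hp' hq, hfun, avgLpNorm_comp_equiv, avgLpNorm_comp_fst]

lemma le_bern {E : Type*} [AddCommGroup E] [Module ℝ E] {N M : E → ℝ≥0∞} {c : ℝ≥0∞}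
    (V : Submodule ℝ E) (hN : ∀ x ∈ V, N x ≠ ∞) (hc : ∀ x ∈ V, N x = 1 → c ≤ M x) :
    c ≤ bern N M (Module.finrank ℝ V) := by
  unfold bern
  exact le_iSup_of_le ⟨V, rfl, hN⟩ (le_iInf fun x => hc x.1 x.2.1 x.2.2)

theorem block_embedding_not_FSS (p₀ p₁ q₀ q₁ : ℝ≥0∞)
    (hp₁ : 0 < p₁) (hp : p₁ ≤ p₀) (hp₀ : p₀ ≠ ∞)
    (hq₀ : 0 < q₀) (hq : q₀ < q₁) (A : ℕ) :
    (∃ c : ℝ≥0∞, 0 < c ∧ ∀ n : ℕ, 1 ≤ n →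
      c ≤ bern (blockNorm p₀ q₀ A) (blockNorm p₁ q₁ A) n) ∧
    ¬ Tendsto (bern (blockNorm p₀ q₀ A) (blockNorm p₁ q₁ A)) atTop (nhds 0) := by
  have hp₀0 : p₀ ≠ 0 := (hp₁.trans_le hp).ne'
  have hp₁' : p₁ ≠ ∞ := ne_top_of_le_ne_top hp₀ hp
  obtain ⟨c, hc, hcomp⟩ :=
    exists_mul_avgLpNorm_rademacherSum_le (toReal_pos hp₁.ne' hp₁') (toReal_pos hp₀0 hp₀)
  have hbern : ∀ n, ENNReal.ofReal c ≤ bern (blockNorm p₀ q₀ A) (blockNorm p₁ q₁ A) n := by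
    intro n
    have hrank : Module.finrank ℝ (rademacherBlock A n).range = n := by
      rw [LinearMap.finrank_range_of_inj (rademacherBlock_injective A n), Module.finrank_fin_fun]
    refine hrank ▸ le_bern _ ?_ ?_
    · rintro _ ⟨a, rfl⟩
      rw [blockNorm_rademacherBlock hp₀0 hp₀ hq₀.ne']
      exact ofReal_ne_top
    · rintro _ ⟨a, rfl⟩ h1
      rw [blockNorm_rademacherBlock hp₀0 hp₀ hq₀.ne'] at h1
      rw [blockNorm_rademacherBlock hp₁.ne' hp₁' (hq₀.trans hq).ne', ← mul_one (ENNReal.ofReal c),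
        ← h1, ← ofReal_mul hc.le]
      exact ofReal_le_ofReal (hcomp a)
  refine ⟨⟨_, ofReal_pos.2 hc, fun n _ => hbern n⟩, fun h => ?_⟩
  obtain ⟨n, hn⟩ := (h.eventually (gt_mem_nhds (ofReal_pos.2 hc))).exists
  exact (hbern n).not_gt hn
end
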